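/- arXiv:1307.5594 — 3 statements merged into one kernel-verified Lean document; each statement's English description precedes it below -/
import Mathlib

section
/- Let L be a complex Laurent polynomial that is self-conjugate, and suppose L = A ∘ L₁ where A ∈ ℂ[z] is a nonconstant polynomial and L₁ ∈ ℂ[z,1/z] is a nonconstant Laurent polynomial. Then there exist complex numbers α, β with α ≠ 0 such that the Laurent polynomial α·L₁ + β is self-conjugate and the polynomial A((z − β)/α) (the composition of A with the inverse of the degree-one polynomial v(z) = αz + β) has real coefficients. -/
/-!
Write `f*(z) = f̄(1/z)`; this is a ring endomorphism of `ℂ[z, 1/z]`, and `L` is self-conjugate iff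
`L* = L`. Applying `*` to `L = A ∘ L₁` gives `A ∘ L₁ = Ā ∘ L₁*`, with `deg A = deg Ā = n`.
Comparing top degrees shows that `L₁` and `L₁*` have the same degree `m > 0`, and comparing the
coefficients of `A ∘ L₁` in degrees above `(n - 1) m` shows that the monomials of positive degree
of `L₁*` are `ζ` times those of `L₁`; the same argument after `z ↦ 1/z` gives a factor `ζ'` for the
monomials of negative degree. Both `ζⁿ` and `ζ'ⁿ` equal the ratio of the leading coefficients of
`A` and `Ā`, while the symmetry `*` forces `ζ ζ̄' = 1`; hence `|ζ| = 1`, `ζ' = ζ` and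
`L₁* = ζ L₁ + c`. For `α² = ζ` the Laurent polynomial `N = α (L₁ - c₀(L₁))` satisfies `N* = N`, and
then, with `v(z) = α z + β`, the polynomial `P = A ∘ v⁻¹` satisfies
`P̄(N) = P(N)* = L* = L = P(N)`, so `P̄ = P` because evaluation at a nonconstant Laurent polynomial
is injective.
-/

open Polynomial LaurentPolynomial

def SelfConjL (L : LaurentPolynomial ℂ) : Prop :=
  ∀ i : ℤ, (starRingEnd ℂ) (L.coeff i) = L.coeff (-i)

namespace LaurentPolynomial

variable {R : Type*}

section Semiring

variable [Semiring R] {f g : R[T;T⁻¹]} {m p q : ℤ}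

theorem degree_le_iff_coeff_eq_zero : f.degree ≤ m ↔ ∀ i, m < i → f.coeff i = 0 := by
  simp only [degree, Finset.max_le_iff, Finsupp.mem_support_iff, WithBot.coe_le_coe]
  exact forall_congr' fun i => by rw [← not_imp_not, not_le, not_not]

theorem coeff_ne_zero_of_degree_eq (h : f.degree = m) : f.coeff m ≠ 0 :=
  Finsupp.mem_support_iff.mp (Finset.mem_of_max h)

theorem le_degree_of_coeff_ne_zero {i : ℤ} (h : f.coeff i ≠ 0) : (i : WithBot ℤ) ≤ f.degree :=
  Finset.le_max (Finsupp.mem_support_iff.mpr h)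

theorem exists_coeff_ne_zero_of_forall_ne_C (hf : ∀ c, f ≠ C c) : ∃ i ≠ 0, f.coeff i ≠ 0 := by
  by_contra! hcon
  refine hf (f.coeff 0) (ext fun i => ?_)
  by_cases hi : i = 0 <;> simp [hi, hcon]

theorem degree_eq_of_coeff_eq_zero_iff (h : ∀ i, f.coeff i = 0 ↔ g.coeff i = 0) :
    f.degree = g.degree := by
  simp only [degree]
  congr 1
  ext i
  simp only [Finsupp.mem_support_iff, ne_eq, h]

theorem degree_mul_le_of_le (hf : f.degree ≤ p) (hg : g.degree ≤ q) :
    (f * g).degree ≤ (p + q : ℤ) :=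
  (AddMonoidAlgebra.supDegree_mul_le (fun _ _ => WithBot.coe_add ..)).trans
    (by rw [WithBot.coe_add]; exact add_le_add hf hg)

theorem coeff_mul_of_degree_le (hf : f.degree ≤ p) (hg : g.degree ≤ q) :
    (f * g).coeff (p + q) = f.coeff p * g.coeff q := by
  rw [AddMonoidAlgebra.coeff_mul_apply_left, Finsupp.sum, Finset.sum_eq_single p]
  · rw [neg_add_cancel_left]
  · intro a ha hap
    have hlt : a < p := lt_of_le_of_ne (not_lt.mp fun h =>
      Finsupp.mem_support_iff.mp ha (degree_le_iff_coeff_eq_zero.mp hf a h)) hap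
    rw [degree_le_iff_coeff_eq_zero.mp hg _ (by omega), mul_zero]
  · intro hp
    rw [Finsupp.notMem_support_iff.mp hp, zero_mul]

theorem degree_pow_le_of_le (hf : f.degree ≤ m) (k : ℕ) : (f ^ k).degree ≤ (k * m : ℤ) := by
  induction k with
  | zero => simpa using degree_C_le (1 : R)
  | succ k ih =>
    rw [pow_succ, Nat.cast_succ, add_one_mul]
    exact degree_mul_le_of_le ih hf

theorem coeff_pow_of_degree_le (hf : f.degree ≤ m) (k : ℕ) :
    (f ^ k).coeff (k * m) = f.coeff m ^ k := by
  induction k with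
  | zero => simp
  | succ k ih =>
    rw [pow_succ, Nat.cast_succ, add_one_mul, coeff_mul_of_degree_le (degree_pow_le_of_le hf k) hf,
      ih, pow_succ]

end Semiring

section CommRing

variable [CommRing R] {f g g' : R[T;T⁻¹]} {m d : ℤ} {P : R[X]} {n : ℕ}

theorem coeff_C_mul (a : R) (f : R[T;T⁻¹]) (i : ℤ) : (C a * f).coeff i = a * f.coeff i := by
  rw [← single_eq_C, AddMonoidAlgebra.coeff_single_zero_mul]

theorem coeff_aeval_eq_sum (hP : P.natDegree ≤ n) (i : ℤ) :
    (aeval f P).coeff i = ∑ k ∈ Finset.range (n + 1), P.coeff k * (f ^ k).coeff i := by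
  rw [aeval_eq_sum_range' (Nat.lt_succ_of_le hP), AddMonoidAlgebra.coeff_sum,
    Finset.sum_apply']
  simp [AddMonoidAlgebra.coeff_smul]

theorem degree_aeval_le_of_le (hm : 0 ≤ m) (hf : f.degree ≤ m) (hP : P.natDegree ≤ n) :
    (aeval f P).degree ≤ (n * m : ℤ) := by
  refine degree_le_iff_coeff_eq_zero.mpr fun i hi => ?_
  rw [coeff_aeval_eq_sum hP]
  refine Finset.sum_eq_zero fun k hk => ?_
  have hkn : (k : ℤ) ≤ n := by exact_mod_cast Finset.mem_range_succ_iff.mp hk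
  rw [degree_le_iff_coeff_eq_zero.mp (degree_pow_le_of_le hf k) i
    ((mul_le_mul_of_nonneg_right hkn hm).trans_lt hi), mul_zero]

theorem coeff_aeval_of_degree_le (hm : 0 < m) (hf : f.degree ≤ m) (hP : P.natDegree ≤ n) :
    (aeval f P).coeff (n * m) = P.coeff n * f.coeff m ^ n := by
  rw [coeff_aeval_eq_sum hP, Finset.sum_range_succ, coeff_pow_of_degree_le hf,
    Finset.sum_eq_zero, zero_add]
  intro k hk
  have hkn : (k : ℤ) < n := by exact_mod_cast Finset.mem_range.mp hk
  rw [degree_le_iff_coeff_eq_zero.mp (degree_pow_le_of_le hf k) _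
    (mul_lt_mul_of_pos_right hkn hm), mul_zero]

theorem degree_aeval [IsDomain R] (hm : 0 < m) (hf : f.degree = m) (hP : P ≠ 0) :
    (aeval f P).degree = (P.natDegree * m : ℤ) := by
  refine le_antisymm (degree_aeval_le_of_le hm.le hf.le le_rfl) (le_degree_of_coeff_ne_zero ?_)
  rw [coeff_aeval_of_degree_le hm hf.le le_rfl]
  exact mul_ne_zero (leadingCoeff_ne_zero.mpr hP) (pow_ne_zero _ (coeff_ne_zero_of_degree_eq hf))

theorem coeff_pow_succ_sub_pow_succ (hg : g.degree ≤ m) (hg' : g'.degree ≤ m)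
    (htop : g.coeff m = g'.coeff m) (hd : (g - g').degree ≤ d) (k : ℕ) :
    (g ^ (k + 1) - g' ^ (k + 1)).degree ≤ (k * m + d : ℤ) ∧
      (g ^ (k + 1) - g' ^ (k + 1)).coeff (k * m + d) =
        (k + 1) * g.coeff m ^ k * (g - g').coeff d := by
  induction k with
  | zero => simpa using hd
  | succ k ih =>
    have hsplit : g ^ (k + 2) - g' ^ (k + 2) =
        g * (g ^ (k + 1) - g' ^ (k + 1)) + (g - g') * g' ^ (k + 1) := by ring
    have hidx₁ : ((k + 1 : ℕ) * m + d : ℤ) = m + (k * m + d) := by push_cast; ring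
    have hidx₂ : ((k + 1 : ℕ) * m + d : ℤ) = d + (k + 1 : ℕ) * m := by ring
    have hpow := degree_pow_le_of_le hg' (k + 1)
    rw [hsplit]
    refine ⟨degree_le_iff_coeff_eq_zero.mpr fun i hi => ?_, ?_⟩
    · rw [AddMonoidAlgebra.coeff_add, Finsupp.add_apply,
        degree_le_iff_coeff_eq_zero.mp (degree_mul_le_of_le hg ih.1) i (by omega),
        degree_le_iff_coeff_eq_zero.mp (degree_mul_le_of_le hd hpow) i (by omega), add_zero]
    · rw [AddMonoidAlgebra.coeff_add, Finsupp.add_apply]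
      nth_rw 1 [hidx₁]
      rw [hidx₂, coeff_mul_of_degree_le hg ih.1, ih.2, coeff_mul_of_degree_le hd hpow,
        coeff_pow_of_degree_le hg', ← htop]
      push_cast
      ring

theorem coeff_aeval_sub_aeval (hm : 0 < m) (hg : g.degree ≤ m) (hg' : g'.degree ≤ m)
    (htop : g.coeff m = g'.coeff m) (hd : (g - g').degree ≤ d) (hP : P.natDegree ≤ n + 1) :
    (aeval g P - aeval g' P).coeff (n * m + d) =
      (n + 1) * P.coeff (n + 1) * g.coeff m ^ n * (g - g').coeff d := by
  rw [AddMonoidAlgebra.coeff_sub, Finsupp.sub_apply, coeff_aeval_eq_sum hP,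
    coeff_aeval_eq_sum hP, ← Finset.sum_sub_distrib]
  simp_rw [← mul_sub, ← Finsupp.sub_apply, ← AddMonoidAlgebra.coeff_sub]
  rw [Finset.sum_range_succ, Finset.sum_range_succ', pow_zero, pow_zero, sub_self,
    AddMonoidAlgebra.coeff_zero, Finsupp.zero_apply, mul_zero, add_zero,
    (coeff_pow_succ_sub_pow_succ hg hg' htop hd n).2, Finset.sum_eq_zero, zero_add]
  · ring
  intro j hj
  have hjn : (j : ℤ) < n := by exact_mod_cast Finset.mem_range.mp hj
  rw [degree_le_iff_coeff_eq_zero.mp (coeff_pow_succ_sub_pow_succ hg hg' htop hd j).1 _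
    (by nlinarith), mul_zero]

variable [IsDomain R] {A B : R[X]}

theorem degree_eq_of_aeval_eq (hm : 0 < m) (hf : f.degree = m)
    (hAB : A.natDegree = B.natDegree) (hB : 0 < B.natDegree) (h : aeval f A = aeval g B) :
    g.degree = m := by
  have hA0 : A ≠ 0 := ne_zero_of_natDegree_gt (hAB ▸ hB)
  have hB0 : B ≠ 0 := ne_zero_of_natDegree_gt hB
  have hdeg : (aeval g B).degree = (B.natDegree * m : ℤ) := by rw [← h, degree_aeval hm hf hA0, hAB]
  rcases le_or_gt g.degree (0 : ℤ) with hg | hg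
  · have := hdeg ▸ degree_aeval_le_of_le le_rfl hg (le_refl B.natDegree)
    rw [mul_zero, WithBot.coe_le_coe] at this
    nlinarith
  · obtain ⟨e, he, he0⟩ := WithBot.lt_iff_exists_coe.mp hg
    rw [degree_aeval (WithBot.coe_lt_coe.mp he0) he hB0, WithBot.coe_inj] at hdeg
    rw [he, mul_left_cancel₀ (by exact_mod_cast hB.ne') hdeg]

theorem exists_degree_eq_of_aeval_eq (hAB : A.natDegree = B.natDegree) (hB : 0 < B.natDegree)
    (h : aeval f A = aeval g B) (hpos : 0 < f.degree ∨ 0 < g.degree) :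
    ∃ m : ℤ, 0 < m ∧ f.degree = m ∧ g.degree = m := by
  rcases hpos with hpos | hpos
  · obtain ⟨m, hf, hm⟩ := WithBot.lt_iff_exists_coe.mp hpos
    have hm := WithBot.coe_lt_coe.mp hm
    exact ⟨m, hm, hf, degree_eq_of_aeval_eq hm hf hAB hB h⟩
  · obtain ⟨m, hg, hm⟩ := WithBot.lt_iff_exists_coe.mp hpos
    have hm := WithBot.coe_lt_coe.mp hm
    exact ⟨m, hm, degree_eq_of_aeval_eq hm hg hAB.symm (hAB ▸ hB) h.symm, hg⟩

end CommRing

section Field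

variable {K : Type*} [Field K] {f g : K[T;T⁻¹]}

theorem C_mul_add_C_ne_C (hf : ∀ c, f ≠ C c) {α : K}
    (hα : α ≠ 0) (β c : K) : C α * f + C β ≠ C c := fun h => by
  refine hf (α⁻¹ * (c - β)) ?_
  have hinv : C α⁻¹ * C α = (1 : K[T;T⁻¹]) := by rw [← map_mul, inv_mul_cancel₀ hα, map_one]
  rw [map_mul, map_sub]
  linear_combination C α⁻¹ * h - f * hinv

theorem aeval_C_mul_add_C_comp {α : K} (hα : α ≠ 0) (β : K) (f : K[T;T⁻¹]) (P : K[X]) :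
    aeval (C α * f + C β) (P.comp (Polynomial.C α⁻¹ * (X - Polynomial.C β))) = aeval f P := by
  rw [aeval_comp]
  congr 1
  simp only [map_mul, map_sub, aeval_C, aeval_X, ← C_eq_algebraMap, add_sub_cancel_right]
  rw [← mul_assoc, ← map_mul, inv_mul_cancel₀ hα, map_one, one_mul]

variable [CharZero K] {A B : K[X]} {m : ℤ} {n : ℕ} {ζ : K}

theorem coeff_eq_mul_coeff_of_aeval_eq (hm : 0 < m) (hf : f.degree ≤ m) (hg : g.degree ≤ m)
    (hgm : g.coeff m ≠ 0) (htop : g.coeff m = ζ * f.coeff m) (hA : A.natDegree ≤ n + 1)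
    (hB : B.natDegree = n + 1) (hζ : B.coeff (n + 1) * ζ ^ (n + 1) = A.coeff (n + 1))
    (h : aeval f A = aeval g B) {i : ℤ} (hi : 0 < i) : g.coeff i = ζ * f.coeff i := by
  by_contra hne
  set g' := C ζ * f
  have hg'm : g.coeff m = g'.coeff m := by rw [coeff_C_mul, htop]
  have hg' : g'.degree ≤ m := by simpa using degree_mul_le_of_le (degree_C_le ζ) hf
  have hDi : (g - g').coeff i ≠ 0 := by
    rw [AddMonoidAlgebra.coeff_sub, Finsupp.sub_apply, coeff_C_mul]
    exact sub_ne_zero.mpr hne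
  have hD0 : g - g' ≠ 0 := fun h0 => hDi (by rw [h0]; rfl)
  obtain ⟨d, hd⟩ := WithBot.ne_bot_iff_exists.mp (mt degree_eq_bot_iff.mp hD0)
  have hid : i ≤ d := WithBot.coe_le_coe.mp (hd ▸ le_degree_of_coeff_ne_zero hDi)
  -- `g - ζ f` has a monomial of positive degree `d`, so `B(g) - B(ζ f)` has one of degree
  -- `n m + d`; but it equals `(A - B(ζ X))(f)`, whose degree is at most `n m`.
  have hcoeff : (aeval g B - aeval g' B).coeff (n * m + d) ≠ 0 := by
    rw [coeff_aeval_sub_aeval hm hg hg' hg'm hd.ge hB.le]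
    exact mul_ne_zero (mul_ne_zero (mul_ne_zero (Nat.cast_add_one_ne_zero n)
      (hB ▸ leadingCoeff_ne_zero.mpr (ne_zero_of_natDegree_gt (n := 0) (by omega))))
      (pow_ne_zero _ hgm)) (coeff_ne_zero_of_degree_eq hd.symm)
  have hdiff : aeval g B - aeval g' B = aeval f (A - B.comp (Polynomial.C ζ * X)) := by
    rw [← h, map_sub, aeval_comp, map_mul, aeval_C, aeval_X, ← C_eq_algebraMap]
  have hdeg : (A - B.comp (Polynomial.C ζ * X)).natDegree ≤ n := by
    refine natDegree_le_pred (n := n + 1) ?_ ?_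
    · refine (natDegree_sub_le _ _).trans (max_le hA ?_)
      have hlin : (Polynomial.C ζ * X).natDegree ≤ 1 :=
        (natDegree_C_mul_le ζ X).trans natDegree_X_le
      exact natDegree_comp_le.trans (by rw [hB]; nlinarith)
    · rw [coeff_sub, comp_C_mul_X_coeff, hζ, sub_self]
  exact hcoeff (hdiff ▸ degree_le_iff_coeff_eq_zero.mp
    (degree_aeval_le_of_le hm.le hf hdeg) _ (by omega))

theorem exists_coeff_eq_mul_coeff_of_aeval_eq (hm : 0 < m) (hf : f.degree = m)
    (hg : g.degree = m) (hAB : A.natDegree = B.natDegree) (hB : 0 < B.natDegree)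
    (h : aeval f A = aeval g B) :
    ∃ ζ, B.leadingCoeff * ζ ^ B.natDegree = A.leadingCoeff ∧
      ∀ i, 0 < i → g.coeff i = ζ * f.coeff i := by
  obtain ⟨n, hn⟩ : ∃ n, B.natDegree = n + 1 := ⟨B.natDegree - 1, by omega⟩
  have hfm := coeff_ne_zero_of_degree_eq hf
  have hgm := coeff_ne_zero_of_degree_eq hg
  have hζ : B.coeff (n + 1) * (g.coeff m / f.coeff m) ^ (n + 1) = A.coeff (n + 1) := by
    have htop : A.coeff (n + 1) * f.coeff m ^ (n + 1) = B.coeff (n + 1) * g.coeff m ^ (n + 1) := by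
      rw [← coeff_aeval_of_degree_le hm hf.le (hAB.trans hn).le,
        ← coeff_aeval_of_degree_le hm hg.le hn.le, h]
    rw [div_pow]
    field_simp
    linear_combination -htop
  refine ⟨g.coeff m / f.coeff m, by rwa [leadingCoeff, leadingCoeff, hAB, hn], fun i hi => ?_⟩
  exact coeff_eq_mul_coeff_of_aeval_eq hm hf.le hg.le hgm (div_mul_cancel₀ _ hfm).symm
    (hAB.trans hn).le hn hζ h hi

end Field

end LaurentPolynomial

theorem Polynomial.aeval_injective_of_forall_ne_algebraMap {K R : Type*} [Field K] [IsAlgClosed K]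
    [CommRing R] [IsDomain R] [Algebra K R] {x : R} (hx : ∀ c, x ≠ algebraMap K R c) :
    Function.Injective (aeval x : K[X] →ₐ[K] R) := by
  refine (injective_iff_map_eq_zero _).mpr fun P hP => by_contra fun hP0 => ?_
  rw [← C_leadingCoeff_mul_prod_multiset_X_sub_C (p := P) IsAlgClosed.card_roots_eq_natDegree,
    map_mul, aeval_C, map_multiset_prod, Multiset.map_map] at hP
  refine mul_ne_zero ((map_ne_zero_iff _ (algebraMap K R).injective).mpr
    (leadingCoeff_ne_zero.mpr hP0)) (Multiset.prod_ne_zero fun h0 => ?_) hP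
  obtain ⟨a, -, ha⟩ := Multiset.mem_map.mp h0
  simp only [Function.comp_apply, map_sub, aeval_X, aeval_C] at ha
  exact hx a (sub_eq_zero.mp ha)

theorem Complex.conj_mul_self_eq_one {z : ℂ} (hz : ‖z‖ = 1) : (starRingEnd ℂ) z * z = 1 := by
  rw [conj_mul', hz, ofReal_one, one_pow]

theorem Complex.eq_of_pow_eq_of_mul_conj_eq_one {ζ ζ' : ℂ} {n : ℕ} (hn : n ≠ 0)
    (hpow : ζ ^ n = ζ' ^ n) (h : ζ * (starRingEnd ℂ) ζ' = 1) : ζ' = ζ ∧ ‖ζ‖ = 1 := by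
  have h' : ζ' * (starRingEnd ℂ) ζ = 1 := by
    simpa [mul_comm] using congrArg (starRingEnd ℂ) h
  have hprod : (ζ * (starRingEnd ℂ) ζ) ^ n = 1 := by rw [mul_pow, hpow, ← mul_pow, h', one_pow]
  have hζ : ‖ζ‖ = 1 := by
    refine (pow_eq_one_iff_of_nonneg (norm_nonneg ζ) (mul_ne_zero two_ne_zero hn)).mp ?_
    simpa [← sq, ← pow_mul] using congrArg norm hprod
  exact ⟨by linear_combination ζ * h' - ζ' * conj_mul_self_eq_one hζ, hζ⟩

namespace LaurentPolynomial

noncomputable def conjInvert : ℂ[T;T⁻¹] →+* ℂ[T;T⁻¹] :=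
  (invert : ℂ[T;T⁻¹] ≃ₐ[ℂ] ℂ[T;T⁻¹]).toRingHom.comp
    (AddMonoidAlgebra.mapRingHom ℤ (starRingEnd ℂ))

@[simp]
theorem coeff_conjInvert (f : ℂ[T;T⁻¹]) (i : ℤ) :
    (conjInvert f).coeff i = starRingEnd ℂ (f.coeff (-i)) := by
  simp [conjInvert, AddMonoidAlgebra.coeff_mapRingHom]

theorem conjInvert_C (a : ℂ) : conjInvert (C a) = C (starRingEnd ℂ a) := by
  ext i
  by_cases hi : i = 0 <;> simp [hi]

theorem conjInvert_aeval (f : ℂ[T;T⁻¹]) (P : ℂ[X]) :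
    conjInvert (aeval f P) = aeval (conjInvert f) (P.map (starRingEnd ℂ)) :=
  map_aeval_eq_aeval_map (RingHom.ext fun a => by simp [conjInvert_C]) P f

theorem selfConjL_iff_conjInvert_eq {f : ℂ[T;T⁻¹]} : SelfConjL f ↔ conjInvert f = f := by
  rw [SelfConjL, LaurentPolynomial.ext_iff]
  refine (Equiv.neg ℤ).forall_congr fun {i} => ?_
  simp [eq_comm]

theorem exists_degree_eq_degree_conjInvert {f : ℂ[T;T⁻¹]} {A : ℂ[X]} (hA : 0 < A.natDegree)
    (hf : ∀ c, f ≠ C c) (h : aeval f A = aeval (conjInvert f) (A.map (starRingEnd ℂ))) :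
    ∃ m : ℤ, 0 < m ∧ f.degree = m ∧ (conjInvert f).degree = m := by
  refine exists_degree_eq_of_aeval_eq (natDegree_map_eq_of_injective (RingHom.injective _) A).symm
    (by rwa [natDegree_map]) h ?_
  obtain ⟨i, hi0, hfi⟩ := exists_coeff_ne_zero_of_forall_ne_C hf
  rcases hi0.lt_or_gt with hi | hi
  · refine .inr ((WithBot.coe_lt_coe.mpr (neg_pos.mpr hi)).trans_le
      (le_degree_of_coeff_ne_zero (i := -i) ?_))
    simpa using hfi
  · exact .inl ((WithBot.coe_lt_coe.mpr hi).trans_le (le_degree_of_coeff_ne_zero hfi))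

theorem exists_conjInvert_eq_C_mul_add_C {f : ℂ[T;T⁻¹]} {A : ℂ[X]} (hA : 0 < A.natDegree)
    (hf : ∀ c, f ≠ C c) (h : aeval f A = aeval (conjInvert f) (A.map (starRingEnd ℂ))) :
    ∃ ζ c : ℂ, ‖ζ‖ = 1 ∧ conjInvert f = C ζ * f + C c := by
  obtain ⟨m, hm, hfm, hgm⟩ := exists_degree_eq_degree_conjInvert hA hf h
  set g := conjInvert f with hg
  have hAB : A.natDegree = (A.map (starRingEnd ℂ)).natDegree := by rw [natDegree_map]
  have hB : 0 < (A.map (starRingEnd ℂ)).natDegree := hAB ▸ hA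
  have hinv : aeval (invert f) A = aeval (invert g) (A.map (starRingEnd ℂ)) := by
    rw [aeval_algHom_apply, aeval_algHom_apply, h]
  have hfm' : (invert f).degree = m :=
    hgm ▸ degree_eq_of_coeff_eq_zero_iff fun i => by simp [g]
  have hgm' : (invert g).degree = m :=
    hfm ▸ degree_eq_of_coeff_eq_zero_iff fun i => by simp [g]
  obtain ⟨ζ, hζn, hζ⟩ := exists_coeff_eq_mul_coeff_of_aeval_eq hm hfm hgm hAB hB h
  obtain ⟨ζ', hζ'n, hζ'⟩ := exists_coeff_eq_mul_coeff_of_aeval_eq hm hfm' hgm' hAB hB hinv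
  have hpow : ζ ^ A.natDegree = ζ' ^ A.natDegree := by
    rw [hAB]
    exact mul_left_cancel₀ (leadingCoeff_ne_zero.mpr (ne_zero_of_natDegree_gt hB))
      (hζn.trans hζ'n.symm)
  have hconj : ζ * starRingEnd ℂ ζ' = 1 := by
    have htop := hζ m hm
    have hbot := congrArg (starRingEnd ℂ) (hζ' m hm)
    simp only [hg, coeff_conjInvert, invert_apply, neg_neg, map_mul, Complex.conj_conj] at htop hbot
    refine mul_right_cancel₀ (coeff_ne_zero_of_degree_eq hfm) ?_
    linear_combination -hbot - starRingEnd ℂ ζ' * htop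
  obtain ⟨rfl, hζ1⟩ := Complex.eq_of_pow_eq_of_mul_conj_eq_one hA.ne' hpow hconj
  refine ⟨ζ', g.coeff 0 - ζ' * f.coeff 0, hζ1, ext fun i => ?_⟩
  rcases lt_trichotomy i 0 with hi | rfl | hi
  · have := hζ' (-i) (by omega)
    simp only [invert_apply, neg_neg] at this
    simp [coeff_C_mul, this, hi.ne]
  · simp [coeff_C_mul]
  · simp [coeff_C_mul, hζ i hi, hi.ne']

theorem selfConjL_C_mul_add_C {f : ℂ[T;T⁻¹]} {ζ c α : ℂ} (hf : conjInvert f = C ζ * f + C c)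
    (hζ : ‖ζ‖ = 1) (hα : α ^ 2 = ζ) : SelfConjL (C α * f + C (-(α * f.coeff 0))) := by
  have hαζ : C (starRingEnd ℂ α) * C ζ = C α := by
    have hα1 : ‖α‖ = 1 :=
      (pow_eq_one_iff_of_nonneg (norm_nonneg α) two_ne_zero).mp (by rw [← norm_pow, hα, hζ])
    rw [← map_mul, ← hα]
    congr 1
    linear_combination α * Complex.conj_mul_self_eq_one hα1
  have hc : c = starRingEnd ℂ (f.coeff 0) - ζ * f.coeff 0 := by
    have h0 := congrArg (fun g => g.coeff 0) hf
    simp only [coeff_conjInvert, neg_zero, AddMonoidAlgebra.coeff_add, Finsupp.add_apply,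
      coeff_C_mul, C_apply, if_true] at h0
    linear_combination -h0
  rw [selfConjL_iff_conjInvert_eq, map_add, map_mul, conjInvert_C, conjInvert_C, hf, hc]
  simp only [map_neg, map_mul, map_sub]
  linear_combination (f - C (f.coeff 0)) * hαζ

theorem map_conj_eq_self_of_selfConjL {N : ℂ[T;T⁻¹]} {P : ℂ[X]} (hN : SelfConjL N)
    (hNc : ∀ c, N ≠ C c) (hP : SelfConjL (aeval N P)) : P.map (starRingEnd ℂ) = P := by
  rw [selfConjL_iff_conjInvert_eq] at hN hP
  refine aeval_injective_of_forall_ne_algebraMap (x := N) (fun c => C_eq_algebraMap c ▸ hNc c) ?_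
  rw [← hP, conjInvert_aeval, hN]

end LaurentPolynomial

/-- **Normalization of polynomial decompositions of self-conjugate Laurent
polynomials.** If a self-conjugate complex Laurent polynomial `L` factors as
`L = A ∘ L₁` with `A ∈ ℂ[z]` nonconstant and `L₁` a nonconstant Laurent polynomial,
then there are `α ≠ 0` and `β` such that `α L₁ + β` is self-conjugate and
`A((z - β)/α)` has real coefficients. -/
theorem normalize_decomposition_of_selfConjugate
    (L L₁ : LaurentPolynomial ℂ) (A : ℂ[X])
    (hA : 1 ≤ A.natDegree)
    (hL₁ : ∀ c : ℂ, L₁ ≠ LaurentPolynomial.C c)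
    (hsc : SelfConjL L)
    (h : L = Polynomial.aeval L₁ A) :
    ∃ α β : ℂ, α ≠ 0 ∧
      SelfConjL (LaurentPolynomial.C α * L₁ + LaurentPolynomial.C β) ∧
      ∀ i : ℕ, ((A.comp (Polynomial.C α⁻¹ * (X - Polynomial.C β))).coeff i).im = 0 := by
  have hL : aeval L₁ A = aeval (conjInvert L₁) (A.map (starRingEnd ℂ)) := by
    rw [← conjInvert_aeval, ← h, selfConjL_iff_conjInvert_eq.mp hsc]
  obtain ⟨ζ, c, hζ, hM⟩ := exists_conjInvert_eq_C_mul_add_C hA hL₁ hL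
  obtain ⟨α, hα⟩ := IsAlgClosed.exists_pow_nat_eq ζ two_pos
  have hα0 : α ≠ 0 := by
    rintro rfl
    simp [← hα] at hζ
  set β := -(α * L₁.coeff 0)
  have hN := selfConjL_C_mul_add_C hM hζ hα
  refine ⟨α, β, hα0, hN, fun i => ?_⟩
  have hreal := map_conj_eq_self_of_selfConjL hN (C_mul_add_C_ne_C hL₁ hα0 β)
    (by rwa [aeval_C_mul_add_C_comp hα0, ← h])
  exact Complex.conj_eq_iff_im.mp (by rw [← coeff_map, hreal])
end

section
/- Let d ≥ 1 be an integer and let A, B be real polynomials with B ≠ 0. Suppose there exists a real trigonometric polynomial p such that p(θ) = A(tan(dθ/2))/B(tan(dθ/2)) for every θ ∈ ℝ with cos(dθ/2) ≠ 0 and B(tan(dθ/2)) ≠ 0. Then there exist an integer k ≥ 1 and a real polynomial Ã with deg à ≤ 2k such that A/B = Ã/(x² + 1)^k as rational functions in ℝ(x); in particular, every complex root of the denominator of A/B (in lowest terms) lies in {i, −i}. -/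
/-!
Substituting `θ = 4 arctan v` turns a trigonometric polynomial into `G(v) / (1 + v²)^n` and
`tan (dθ/2)` into `S(v) / C(v)`, where `C + iS = (1 + iX)^(2d)`. With `A/B = A₀/B₀` in lowest
terms, the hypothesis becomes the polynomial identity `G · B₀* = (1 + X²)^n · A₀*`, where
`P* = C^M · P(S/C)` with denominators cleared. Every `z ≠ ±i` equals `S(v)/C(v)` for some complex
`v` with `1 + v² ≠ 0`, so the identity forbids `B₀(z) = 0`; at a real zero of `C` it forces
`deg A₀ ≤ deg B₀`. Finally, a monic real polynomial whose complex roots lie in `{i, -i}` is a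
power of `X² + 1`.
-/

open Polynomial

def IsTrigPoly (p : ℝ → ℝ) : Prop :=
  p ∈ Algebra.adjoin ℝ ({Real.cos, Real.sin} : Set (ℝ → ℝ))

open Real
open Complex (I)

-- `cos (n t) = cos t ^ n * cosPoly n (tan t)`, `sin (n t) = cos t ^ n * sinPoly n (tan t)`.
noncomputable def cosSinPoly : ℕ → ℝ[X] × ℝ[X]
  | 0 => (1, 0)
  | n + 1 => ((cosSinPoly n).1 - X * (cosSinPoly n).2, (cosSinPoly n).2 + X * (cosSinPoly n).1)

noncomputable def cosPoly (n : ℕ) : ℝ[X] := (cosSinPoly n).1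

noncomputable def sinPoly (n : ℕ) : ℝ[X] := (cosSinPoly n).2

@[simp] lemma cosPoly_zero : cosPoly 0 = 1 := rfl
@[simp] lemma sinPoly_zero : sinPoly 0 = 0 := rfl
@[simp] lemma cosPoly_succ (n : ℕ) : cosPoly (n + 1) = cosPoly n - X * sinPoly n := rfl
@[simp] lemma sinPoly_succ (n : ℕ) : sinPoly (n + 1) = sinPoly n + X * cosPoly n := rfl

theorem cos_sin_nat_mul_arctan (n : ℕ) (v : ℝ) :
    cos (n * arctan v) = cos (arctan v) ^ n * (cosPoly n).eval v ∧
      sin (n * arctan v) = cos (arctan v) ^ n * (sinPoly n).eval v := by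
  have hsin : sin (arctan v) = v * cos (arctan v) := by
    rw [← tan_mul_cos (cos_arctan_pos v).ne', tan_arctan]
  induction n with
  | zero => simp
  | succ n ih =>
    simp only [Nat.cast_succ, add_mul, one_mul, cos_add, sin_add, ih.1, ih.2, hsin,
      cosPoly_succ, sinPoly_succ, eval_sub, eval_add, eval_mul, eval_X]
    constructor <;> ring

theorem cosPoly_ne_zero (d : ℕ) : cosPoly d ≠ 0 := by
  intro h
  simpa [h] using (cos_sin_nat_mul_arctan d 0).1

theorem exists_eval_cosPoly_eq_zero {d : ℕ} (hd : 2 ≤ d) :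
    ∃ v : ℝ, (cosPoly d).eval v = 0 ∧ (sinPoly d).eval v ≠ 0 := by
  have hd' : (2 : ℝ) ≤ d := by exact_mod_cast hd
  have ht₀ : 0 < π / (2 * d) := by positivity
  have ht₁ : π / (2 * d) < π / 2 := by
    apply div_lt_div_of_pos_left pi_pos two_pos; linarith
  obtain ⟨hc, hs⟩ := cos_sin_nat_mul_arctan d (tan (π / (2 * d)))
  have hcos := cos_arctan_pos (tan (π / (2 * d)))
  rw [arctan_tan (by linarith) ht₁] at hc hs hcos
  rw [show (d : ℝ) * (π / (2 * d)) = π / 2 by field_simp, cos_pi_div_two] at hc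
  rw [show (d : ℝ) * (π / (2 * d)) = π / 2 by field_simp, sin_pi_div_two] at hs
  refine ⟨tan (π / (2 * d)), ?_, fun h => by simp [h] at hs⟩
  exact (mul_eq_zero.mp hc.symm).resolve_left (pow_ne_zero _ hcos.ne')

theorem aeval_cosPoly_add_mul_sinPoly {A : Type*} [CommRing A] [Algebra ℝ A] (n : ℕ) (v : A)
    {s : A} (hs : s * s = -1) :
    aeval v (cosPoly n) + s * aeval v (sinPoly n) = (1 + s * v) ^ n := by
  induction n with
  | zero => simp
  | succ n ih =>
    simp only [cosPoly_succ, sinPoly_succ, map_sub, map_add, map_mul, aeval_X, pow_succ, ← ih]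
    linear_combination (-(v * aeval v (sinPoly n))) * hs

theorem exists_aeval_sinPoly_eq_mul {d : ℕ} (hd : d ≠ 0) (z : ℂ) :
    ∃ v : ℂ, aeval v (sinPoly d) = z * aeval v (cosPoly d) := by
  have hplus (x : ℂ) := aeval_cosPoly_add_mul_sinPoly d x Complex.I_mul_I
  have hminus (x : ℂ) := aeval_cosPoly_add_mul_sinPoly d x (s := -I) (by simp)
  set Q : ℂ[X] := (sinPoly d).map (algebraMap ℝ ℂ) - C z * (cosPoly d).map (algebraMap ℝ ℂ)
  have hQ (x : ℂ) :
      2 * I * Q.eval x = (1 - I * z) * (1 + I * x) ^ d - (1 + I * z) * (1 + -I * x) ^ d := by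
    simp only [Q, eval_sub, eval_mul, eval_C, eval_map_algebraMap, ← hplus, ← hminus]
    ring
  have hQdeg : 0 < Q.degree := by
    by_contra! h
    have hQI := hQ I
    have hQI' := hQ (-I)
    rw [eq_C_of_degree_le_zero h, eval_C] at hQI hQI'
    simp only [Complex.I_mul_I, add_neg_cancel, zero_pow hd, mul_zero, neg_mul, neg_neg,
      zero_sub, mul_neg, sub_zero] at hQI hQI'
    have h2 : (2 : ℂ) ^ (d + 1) = 0 := by linear_combination hQI - hQI'
    exact pow_ne_zero _ two_ne_zero h2
  obtain ⟨v, hv⟩ := Complex.exists_root hQdeg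
  exact ⟨v, by simpa [Q, sub_eq_zero, eval_map_algebraMap] using hv⟩

theorem aeval_cosPoly_ne_zero_of_aeval_sinPoly_eq_mul {d : ℕ} (hd : d ≠ 0) {v z : ℂ}
    (hs : aeval v (sinPoly d) = z * aeval v (cosPoly d)) : aeval v (cosPoly d) ≠ 0 := by
  intro h0
  have hplus := aeval_cosPoly_add_mul_sinPoly d v Complex.I_mul_I
  have hminus := aeval_cosPoly_add_mul_sinPoly d v (s := -I) (by simp)
  rw [hs, h0, mul_zero, mul_zero, add_zero, eq_comm, pow_eq_zero_iff hd] at hplus hminus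
  have : (2 : ℂ) = 0 := by linear_combination hplus + hminus
  norm_num at this

theorem one_add_sq_ne_zero_of_aeval_sinPoly_eq_mul {d : ℕ} (hd : d ≠ 0) {v z : ℂ} (hzI : z ≠ I)
    (hzI' : z ≠ -I) (hs : aeval v (sinPoly d) = z * aeval v (cosPoly d)) : 1 + v ^ 2 ≠ 0 := by
  intro h0
  have hc := aeval_cosPoly_ne_zero_of_aeval_sinPoly_eq_mul hd hs
  have hplus := aeval_cosPoly_add_mul_sinPoly d v Complex.I_mul_I
  have hminus := aeval_cosPoly_add_mul_sinPoly d v (s := -I) (by simp)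
  rw [hs] at hplus hminus
  have hfactor : (1 + I * v) * (1 + -I * v) = 0 := by
    linear_combination h0 - v ^ 2 * Complex.I_mul_I
  rcases mul_eq_zero.mp hfactor with h | h
  · rw [h, zero_pow hd] at hplus
    have : 1 + I * z = 0 := (mul_eq_zero.mp (by linear_combination hplus)).resolve_left hc
    exact hzI (by linear_combination (-I) * this + z * Complex.I_mul_I)
  · rw [h, zero_pow hd] at hminus
    have : 1 + -I * z = 0 := (mul_eq_zero.mp (by linear_combination hminus)).resolve_left hc
    exact hzI' (by linear_combination I * this + z * Complex.I_mul_I)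

theorem IsTrigPoly.exists_mul_one_add_sq_pow_eq_eval (m : ℕ) {p : ℝ → ℝ} (hp : IsTrigPoly p) :
    ∃ (n : ℕ) (G : ℝ[X]), ∀ v : ℝ, p (2 * m * arctan v) * (1 + v ^ 2) ^ n = G.eval v := by
  induction hp using Algebra.adjoin_induction with
  | mem f hf =>
    have hcos (v : ℝ) : cos (arctan v) ^ (2 * m) * (1 + v ^ 2) ^ m = 1 := by
      rw [pow_mul, cos_sq_arctan, ← mul_pow, one_div, inv_mul_cancel₀ (by positivity), one_pow]
    have harg (v : ℝ) : 2 * (m : ℝ) * arctan v = ((2 * m : ℕ) : ℝ) * arctan v := by push_cast; ring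
    rcases hf with rfl | rfl
    · refine ⟨m, cosPoly (2 * m), fun v => ?_⟩
      rw [harg, (cos_sin_nat_mul_arctan _ v).1, mul_right_comm, hcos, one_mul]
    · refine ⟨m, sinPoly (2 * m), fun v => ?_⟩
      rw [harg, (cos_sin_nat_mul_arctan _ v).2, mul_right_comm, hcos, one_mul]
  | algebraMap r => exact ⟨0, C r, by simp⟩
  | add f g _ _ ihf ihg =>
    obtain ⟨n₁, G₁, h₁⟩ := ihf
    obtain ⟨n₂, G₂, h₂⟩ := ihg
    refine ⟨n₁ + n₂, G₁ * (1 + X ^ 2) ^ n₂ + G₂ * (1 + X ^ 2) ^ n₁, fun v => ?_⟩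
    simp only [eval_add, eval_mul, eval_pow, eval_one, eval_X, ← h₁, ← h₂, Pi.add_apply]
    ring
  | mul f g _ _ ihf ihg =>
    obtain ⟨n₁, G₁, h₁⟩ := ihf
    obtain ⟨n₂, G₂, h₂⟩ := ihg
    refine ⟨n₁ + n₂, G₁ * G₂, fun v => ?_⟩
    simp only [eval_mul, ← h₁, ← h₂, Pi.mul_apply]
    ring

theorem IsTrigPoly.exists_eval_mul_eq_of_eq_div_tan {d : ℕ} {A B : ℝ[X]} {p : ℝ → ℝ}
    (hp : IsTrigPoly p)
    (hpA : ∀ θ : ℝ, cos (d * θ / 2) ≠ 0 → B.eval (tan (d * θ / 2)) ≠ 0 →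
      p θ = A.eval (tan (d * θ / 2)) / B.eval (tan (d * θ / 2))) :
    ∃ (n : ℕ) (G : ℝ[X]), ∀ v : ℝ, (cosPoly (2 * d)).eval v ≠ 0 →
      B.eval ((sinPoly (2 * d)).eval v / (cosPoly (2 * d)).eval v) ≠ 0 →
      G.eval v * B.eval ((sinPoly (2 * d)).eval v / (cosPoly (2 * d)).eval v) =
        (1 + v ^ 2) ^ n * A.eval ((sinPoly (2 * d)).eval v / (cosPoly (2 * d)).eval v) := by
  -- `θ = 4 arctan v` rather than `2 arctan v`: the index `2 * d ≥ 2` guarantees that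
  -- `cosPoly (2 * d)` has a real zero (`exists_eval_cosPoly_eq_zero`).
  obtain ⟨n, G, hG⟩ := hp.exists_mul_one_add_sq_pow_eq_eval 2
  refine ⟨n, G, fun v hc hB => ?_⟩
  obtain ⟨hcos, hsin⟩ := cos_sin_nat_mul_arctan (2 * d) v
  have hpos := pow_ne_zero (2 * d) (cos_arctan_pos v).ne'
  have harg : (d : ℝ) * (2 * (2 : ℕ) * arctan v) / 2 = ((2 * d : ℕ) : ℝ) * arctan v := by
    push_cast; ring
  have htan : tan (((2 * d : ℕ) : ℝ) * arctan v) =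
      (sinPoly (2 * d)).eval v / (cosPoly (2 * d)).eval v := by
    rw [tan_eq_sin_div_cos, hcos, hsin, mul_div_mul_left _ _ hpos]
  have hpv := hpA (2 * (2 : ℕ) * arctan v) (by rw [harg, hcos]; exact mul_ne_zero hpos hc)
    (by rwa [harg, htan])
  rw [harg, htan] at hpv
  rw [← hG v, hpv]
  field_simp

section
variable {R : Type*} [CommSemiring R]

-- `T ^ M * P (S / T)` with the denominators cleared, for `P.natDegree ≤ M`.
noncomputable def homogComp (M : ℕ) (P S T : R[X]) : R[X] :=
  ∑ j ∈ Finset.range (M + 1), C (P.coeff j) * S ^ j * T ^ (M - j)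

theorem aeval_homogComp {A : Type*} [CommSemiring A] [Algebra R A] {M : ℕ} {P : R[X]}
    (hP : P.natDegree ≤ M) (S T : R[X]) {v z : A} (h : aeval v S = z * aeval v T) :
    aeval v (homogComp M P S T) = aeval v T ^ M * aeval z P := by
  rw [homogComp, map_sum, aeval_eq_sum_range' (Nat.lt_succ_of_le hP), Finset.mul_sum]
  refine Finset.sum_congr rfl fun j hj => ?_
  have hjM : j + (M - j) = M := Nat.add_sub_cancel' (Nat.lt_succ_iff.mp (Finset.mem_range.mp hj))
  rw [map_mul, map_mul, map_pow, map_pow, h, aeval_C, Algebra.smul_def, ← hjM, pow_add,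
    Nat.add_sub_cancel_left]
  ring

theorem eval_homogComp_of_eval_eq_zero (M : ℕ) (P S : R[X]) {T : R[X]} {v : R}
    (hT : T.eval v = 0) : (homogComp M P S T).eval v = P.coeff M * S.eval v ^ M := by
  rw [homogComp, eval_finsetSum, Finset.sum_eq_single M]
  · simp
  · intro j hj hjM
    have : M - j ≠ 0 := by have := Finset.mem_range.mp hj; omega
    simp [hT, zero_pow this]
  · simp
end

theorem eval_homogComp {K : Type*} [Field K] {M : ℕ} {P : K[X]} (hP : P.natDegree ≤ M)
    (S : K[X]) {T : K[X]} {v : K} (hT : T.eval v ≠ 0) :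
    (homogComp M P S T).eval v = T.eval v ^ M * P.eval (S.eval v / T.eval v) := by
  simpa only [coe_aeval_eq_eval] using
    aeval_homogComp hP S T (v := v) (z := S.eval v / T.eval v) (by simp [div_mul_cancel₀ _ hT])

theorem homogComp_sinPoly_cosPoly_ne_zero {d M : ℕ} (hd : d ≠ 0) {P : ℝ[X]} (hP : P ≠ 0)
    (hM : P.natDegree ≤ M) : homogComp M P (sinPoly d) (cosPoly d) ≠ 0 := by
  obtain ⟨z, hz⟩ := Infinite.exists_notMem_finset (P.aroots ℂ).toFinset
  rw [Multiset.mem_toFinset, mem_aroots, not_and] at hz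
  obtain ⟨v, hs⟩ := exists_aeval_sinPoly_eq_mul hd z
  intro h0
  have hv := aeval_homogComp hM _ _ hs
  rw [h0, map_zero, eq_comm] at hv
  exact mul_ne_zero (pow_ne_zero M (aeval_cosPoly_ne_zero_of_aeval_sinPoly_eq_mul hd hs)) (hz hP) hv

section
variable {d M n : ℕ} {A B A₀ B₀ G : ℝ[X]}

theorem mul_homogComp_eq_of_forall_eval (hd : d ≠ 0) (hB : B ≠ 0) (hA₀ : A₀.natDegree ≤ M)
    (hB₀ : B₀.natDegree ≤ M) (hcross : A₀ * B = A * B₀)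
    (h : ∀ v : ℝ, (cosPoly d).eval v ≠ 0 →
      B.eval ((sinPoly d).eval v / (cosPoly d).eval v) ≠ 0 →
      G.eval v * B.eval ((sinPoly d).eval v / (cosPoly d).eval v) =
        (1 + v ^ 2) ^ n * A.eval ((sinPoly d).eval v / (cosPoly d).eval v)) :
    G * homogComp M B₀ (sinPoly d) (cosPoly d) =
      (1 + X ^ 2) ^ n * homogComp M A₀ (sinPoly d) (cosPoly d) := by
  -- `R` vanishes wherever `h` is unavailable.
  set R := cosPoly d * homogComp B.natDegree B (sinPoly d) (cosPoly d)
  have hR : R ≠ 0 :=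
    mul_ne_zero (cosPoly_ne_zero d) (homogComp_sinPoly_cosPoly_ne_zero hd hB le_rfl)
  rw [← sub_eq_zero, ← mul_left_inj' hR, zero_mul]
  refine Polynomial.funext fun v => ?_
  by_cases hv : R.eval v = 0
  · simp [hv]
  obtain ⟨hc, hBv⟩ := mul_ne_zero_iff.mp (eval_mul (p := cosPoly d) ▸ hv)
  rw [eval_homogComp le_rfl _ hc] at hBv
  set w := (sinPoly d).eval v / (cosPoly d).eval v
  have hBw : B.eval w ≠ 0 := right_ne_zero_of_mul hBv
  have hAB : A₀.eval w * B.eval w = A.eval w * B₀.eval w := by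
    simpa only [eval_mul] using congrArg (eval w) hcross
  have hw : G.eval v * B₀.eval w = (1 + v ^ 2) ^ n * A₀.eval w := by
    apply mul_left_cancel₀ hBw
    linear_combination B₀.eval w * h v hc hBw - (1 + v ^ 2) ^ n * hAB
  simp only [eval_mul, eval_sub, eval_pow, eval_add, eval_one, eval_X, eval_zero,
    eval_homogComp hA₀ _ hc, eval_homogComp hB₀ _ hc]
  linear_combination (eval v (cosPoly d) ^ M * eval v R) * hw

theorem eq_I_or_eq_neg_I_of_mul_homogComp_eq (hd : d ≠ 0) (hcop : IsCoprime A₀ B₀)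
    (hA₀ : A₀.natDegree ≤ M) (hB₀ : B₀.natDegree ≤ M)
    (hid : G * homogComp M B₀ (sinPoly d) (cosPoly d) =
      (1 + X ^ 2) ^ n * homogComp M A₀ (sinPoly d) (cosPoly d))
    {z : ℂ} (hz : aeval z B₀ = 0) : z = I ∨ z = -I := by
  by_contra! hne
  obtain ⟨v, hs⟩ := exists_aeval_sinPoly_eq_mul hd z
  have hc := aeval_cosPoly_ne_zero_of_aeval_sinPoly_eq_mul hd hs
  have hv := one_add_sq_ne_zero_of_aeval_sinPoly_eq_mul hd hne.1 hne.2 hs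
  have hA₀z : aeval z A₀ ≠ 0 := fun h0 => by
    obtain ⟨a, b, hab⟩ := hcop
    simpa [h0, hz] using congrArg (aeval z) hab
  have hidv := congrArg (aeval v) hid
  simp only [map_mul, map_pow, map_add, map_one, aeval_X, aeval_homogComp hB₀ _ _ hs,
    aeval_homogComp hA₀ _ _ hs, hz, mul_zero, zero_eq_mul] at hidv
  simp [hv, hc, hA₀z] at hidv

theorem natDegree_le_of_mul_homogComp_eq (hd : 2 ≤ d)
    (hid : G * homogComp (max A₀.natDegree B₀.natDegree) B₀ (sinPoly d) (cosPoly d) =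
      (1 + X ^ 2) ^ n * homogComp (max A₀.natDegree B₀.natDegree) A₀ (sinPoly d) (cosPoly d)) :
    A₀.natDegree ≤ B₀.natDegree := by
  by_contra! hlt
  have hA₀ : A₀ ≠ 0 := by rintro rfl; simp at hlt
  rw [max_eq_left hlt.le] at hid
  obtain ⟨v, hc, hs⟩ := exists_eval_cosPoly_eq_zero hd
  have hidv := congrArg (eval v) hid
  simp only [eval_mul, eval_homogComp_of_eval_eq_zero _ _ _ hc, coeff_eq_zero_of_natDegree_lt hlt,
    zero_mul, mul_zero, eval_pow, eval_add, eval_one, eval_X] at hidv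
  exact mul_ne_zero (by positivity) (mul_ne_zero (leadingCoeff_ne_zero.mpr hA₀) (pow_ne_zero _ hs))
    hidv.symm
end

theorem natDegree_X_sq_add_one : (X ^ 2 + 1 : ℝ[X]).natDegree = 2 := by
  compute_degree!

theorem monic_X_sq_add_one : (X ^ 2 + 1 : ℝ[X]).Monic := by
  monicity!

theorem X_sq_add_one_dvd_of_aeval_I_eq_zero {B : ℝ[X]} (h : aeval I B = 0) : X ^ 2 + 1 ∣ B := by
  have hirr : Irreducible (X ^ 2 + 1 : ℝ[X]) :=
    irreducible_of_degree_le_three_of_not_isRoot (by simp [natDegree_X_sq_add_one])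
      (fun x => by simp only [IsRoot.def, eval_add, eval_pow, eval_X, eval_one]; positivity)
  rw [minpoly.eq_of_irreducible_of_monic (x := I) hirr (by simp) monic_X_sq_add_one]
  exact minpoly.dvd ℝ I h

theorem Polynomial.Monic.eq_X_sq_add_one_pow {B : ℝ[X]} (hB : B.Monic)
    (h : ∀ z : ℂ, aeval z B = 0 → z = I ∨ z = -I) : ∃ m : ℕ, B = (X ^ 2 + 1) ^ m := by
  induction hdeg : B.natDegree using Nat.strong_induction_on generalizing B with
  | _ N ih =>
  rcases Nat.eq_zero_or_pos N with rfl | hpos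
  · exact ⟨0, by rw [pow_zero]; exact hB.natDegree_eq_zero.mp hdeg⟩
  obtain ⟨z, hz⟩ := Complex.exists_root (f := B.map (algebraMap ℝ ℂ))
    (by rw [Polynomial.degree_map]; exact natDegree_pos_iff_degree_pos.mp (hdeg ▸ hpos))
  have hI : aeval I B = 0 := by
    rw [IsRoot.def, eval_map_algebraMap] at hz
    rcases h z hz with rfl | rfl
    · exact hz
    · rw [← Complex.conj_neg_I, aeval_conj, hz, map_zero]
  obtain ⟨Q, rfl⟩ := X_sq_add_one_dvd_of_aeval_I_eq_zero hI
  have hQ : Q.Monic := monic_X_sq_add_one.of_mul_monic_left hB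
  have hdegQ : Q.natDegree < N := by
    rw [← hdeg, Polynomial.natDegree_mul monic_X_sq_add_one.ne_zero hQ.ne_zero,
      natDegree_X_sq_add_one]
    omega
  obtain ⟨m, rfl⟩ := ih _ hdegQ hQ (fun z hz => h z (by simp [hz])) rfl
  exact ⟨m + 1, by ring⟩

/-- **Remark after Lemma 2.3.** If `A(tan(dθ/2))/B(tan(dθ/2))` agrees (where defined)
with a real trigonometric polynomial, then `A/B = Ã/(x²+1)^k` in `ℝ(x)` for some `k ≥ 1`
and some real polynomial `Ã` with `deg Ã ≤ 2k`; in particular all complex roots of the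
denominator of `A/B` in lowest terms lie in `{i, -i}`. -/
theorem rational_in_tan_is_trigPoly_denominator
    (d : ℕ) (hd : 1 ≤ d)
    (A B : ℝ[X]) (hB : B ≠ 0)
    (hex : ∃ p : ℝ → ℝ, IsTrigPoly p ∧
      ∀ θ : ℝ, Real.cos (d * θ / 2) ≠ 0 → B.eval (Real.tan (d * θ / 2)) ≠ 0 →
        p θ = A.eval (Real.tan (d * θ / 2)) / B.eval (Real.tan (d * θ / 2))) :
    (∃ k : ℕ, 1 ≤ k ∧ ∃ At : ℝ[X], At.natDegree ≤ 2 * k ∧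
        algebraMap ℝ[X] (RatFunc ℝ) A / algebraMap ℝ[X] (RatFunc ℝ) B =
          algebraMap ℝ[X] (RatFunc ℝ) At /
            algebraMap ℝ[X] (RatFunc ℝ) ((X ^ 2 + 1) ^ k)) ∧
      ∀ z : ℂ,
        Polynomial.aeval z
            ((algebraMap ℝ[X] (RatFunc ℝ) A / algebraMap ℝ[X] (RatFunc ℝ) B).denom) = 0 →
          z = Complex.I ∨ z = -Complex.I := by
  obtain ⟨p, hp, hpA⟩ := hex
  obtain ⟨n, G, hG⟩ := hp.exists_eval_mul_eq_of_eq_div_tan hpA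
  set f := algebraMap ℝ[X] (RatFunc ℝ) A / algebraMap ℝ[X] (RatFunc ℝ) B
  have hid := mul_homogComp_eq_of_forall_eval (by omega) hB (le_max_left _ _) (le_max_right _ _)
    ((RatFunc.num_mul_eq_mul_denom_iff hB).mpr rfl) hG
  have hroots (z : ℂ) (hz : aeval z f.denom = 0) : z = I ∨ z = -I :=
    eq_I_or_eq_neg_I_of_mul_homogComp_eq (by omega) (RatFunc.isCoprime_num_denom f)
      (le_max_left _ _) (le_max_right _ _) hid hz
  have hdeg : f.num.natDegree ≤ f.denom.natDegree :=
    natDegree_le_of_mul_homogComp_eq (by omega) hid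
  obtain ⟨m, hm⟩ := f.monic_denom.eq_X_sq_add_one_pow hroots
  rw [hm, natDegree_pow, natDegree_X_sq_add_one] at hdeg
  refine ⟨⟨m + 1, by omega, f.num * (X ^ 2 + 1), ?_, ?_⟩, hroots⟩
  · calc _ ≤ f.num.natDegree + (X ^ 2 + 1 : ℝ[X]).natDegree := natDegree_mul_le
      _ ≤ 2 * (m + 1) := by rw [natDegree_X_sq_add_one]; omega
  · refine (RatFunc.num_mul_eq_mul_denom_iff (pow_ne_zero _ monic_X_sq_add_one.ne_zero)).mp ?_
    rw [hm]
    ring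
end

section
/- Let P̃, Q̃, W be polynomials with real coefficients satisfying W(0) = W(1), and set P = P̃ ∘ W and Q = Q̃ ∘ W (polynomial composition). Then for every integer i ≥ 0, the integral ∫₀¹ P(x)^i · Q′(x) dx equals 0, where Q′ denotes the derivative of the polynomial Q. -/
open Polynomial

lemma exists_antideriv (S : ℝ[X]) : ∃ R : ℝ[X], derivative R = S := by
  induction S using Polynomial.induction_on' with
  | add p q hp hq =>
    obtain ⟨R1, h1⟩ := hp; obtain ⟨R2, h2⟩ := hq
    exact ⟨R1 + R2, by simp [h1, h2]⟩
  | monomial n a =>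
    refine ⟨C (a / (n + 1)) * X ^ (n + 1), ?_⟩
    rw [derivative_C_mul, derivative_X_pow]
    push_cast
    rw [← mul_assoc, ← C_mul, div_mul_cancel₀ _ (by positivity), C_mul_X_pow_eq_monomial]

/-- **Composition condition implies vanishing of polynomial moments.**
If `P = P̃ ∘ W` and `Q = Q̃ ∘ W` for real polynomials with `W(0) = W(1)`, then all
the moments `∫₀¹ P^i Q′ dx` vanish. -/
theorem polynomial_moments_vanish_of_common_composition
    (Pt Qt W : ℝ[X]) (hW : W.eval 0 = W.eval 1)
    (P Q : ℝ[X]) (hP : P = Pt.comp W) (hQ : Q = Qt.comp W) :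
    ∀ i : ℕ, (∫ x in (0:ℝ)..1, P.eval x ^ i * Q.derivative.eval x) = 0 := by
  intro i
  obtain ⟨R, hR⟩ := exists_antideriv (Pt ^ i * derivative Qt)
  have key : derivative (R.comp W) = P ^ i * derivative Q := by
    rw [derivative_comp, hR, hP, hQ, derivative_comp, ← pow_comp, mul_comp]; ring
  have : (∫ x in (0:ℝ)..1, P.eval x ^ i * Q.derivative.eval x)
      = ∫ x in (0:ℝ)..1, (derivative (R.comp W)).eval x := by
    simp [key]
  rw [this]
  have h2 : (∫ x in (0:ℝ)..1, (derivative (R.comp W)).eval x)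
      = ∫ x in (0:ℝ)..1, deriv (fun y => (R.comp W).eval y) x := by
    simp only [Polynomial.deriv]
  rw [h2, intervalIntegral.integral_deriv_eq_sub (f := fun x => (R.comp W).eval x)]
  · simp [eval_comp, hW]
  · intro x _
    exact ((R.comp W).hasDerivAt x).differentiableAt
  · have : deriv (fun y => (R.comp W).eval y) = fun x => (R.comp W).derivative.eval x :=
      funext fun x => Polynomial.deriv (p := R.comp W)
    rw [this]
    exact (R.comp W).derivative.continuous.intervalIntegrable 0 1
end
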